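/- arXiv:2508.07742 — 9 statements merged into one kernel-verified Lean document; each statement's English description precedes it below -/
import Mathlib

section
/- If R is a completion-optimal repair of a prioritized knowledge base, then R is a Pareto-optimal repair. -/
variable {F : Type*}

/-- A set is consistent w.r.t. a family of conflicts if it includes no conflict. -/
def Consistent (Conf : Set (Set F)) (S : Set F) : Prop := ∀ C ∈ Conf, ¬ C ⊆ S

/-- A repair: an inclusion-maximal consistent subset of the dataset `D`. -/
def IsRepair (D : Set F) (Conf : Set (Set F)) (R : Set F) : Prop :=
  R ⊆ D ∧ Consistent Conf R ∧ ∀ S, S ⊆ D → Consistent Conf S → R ⊆ S → S = R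

/-- A relation is acyclic if it admits no directed cycle. -/
def Acyclic (r : F → F → Prop) : Prop := ∀ a, ¬ Relation.TransGen r a a

/-- A priority relation: acyclic, relating only facts co-occurring in some conflict. -/
def IsPriority (Conf : Set (Set F)) (p : F → F → Prop) : Prop :=
  Acyclic p ∧ ∀ a b, p a b → ∃ C ∈ Conf, a ∈ C ∧ b ∈ C

/-- A total priority relation compares every pair of distinct conflicting facts. -/
def IsTotalPriority (Conf : Set (Set F)) (p : F → F → Prop) : Prop :=
  IsPriority Conf p ∧
    ∀ a b, a ≠ b → (∃ C ∈ Conf, a ∈ C ∧ b ∈ C) → p a b ∨ p b a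

/-- A completion of `p` is a total priority relation extending `p`. -/
def IsCompletion (Conf : Set (Set F)) (p p' : F → F → Prop) : Prop :=
  IsTotalPriority Conf p' ∧ ∀ a b, p a b → p' a b

/-- A Pareto improvement of `R`: a consistent `B ⊆ D` containing some `β ∉ R`
with `β ≻ α` for every `α ∈ R \ B`. -/
def ParetoImprovement (D : Set F) (Conf : Set (Set F)) (p : F → F → Prop)
    (R B : Set F) : Prop :=
  B ⊆ D ∧ Consistent Conf B ∧ ∃ β ∈ B, β ∉ R ∧ ∀ α ∈ R, α ∉ B → p β α

/-- A Pareto-optimal repair: a repair with no Pareto improvement. -/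
def ParetoOptimal (D : Set F) (Conf : Set (Set F)) (p : F → F → Prop) (R : Set F) : Prop :=
  IsRepair D Conf R ∧ ¬ ∃ B, ParetoImprovement D Conf p R B

/-- A completion-optimal repair: Pareto-optimal for some completion of `p`. -/
def CompletionOptimal (D : Set F) (Conf : Set (Set F)) (p : F → F → Prop) (R : Set F) : Prop :=
  ∃ p', IsCompletion Conf p p' ∧ ParetoOptimal D Conf p' R

theorem ParetoImprovement.mono {D : Set F} {Conf : Set (Set F)} {p q : F → F → Prop}
    {R B : Set F} (hpq : ∀ a b, p a b → q a b) (hB : ParetoImprovement D Conf p R B) :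
    ParetoImprovement D Conf q R B :=
  let ⟨hBD, hBc, β, hβB, hβR, hβ⟩ := hB
  ⟨hBD, hBc, β, hβB, hβR, fun α hαR hαB => hpq β α (hβ α hαR hαB)⟩

theorem ParetoOptimal.anti {D : Set F} {Conf : Set (Set F)} {p q : F → F → Prop}
    {R : Set F} (hpq : ∀ a b, p a b → q a b) (hR : ParetoOptimal D Conf q R) :
    ParetoOptimal D Conf p R :=
  ⟨hR.1, fun ⟨B, hB⟩ => hR.2 ⟨B, hB.mono hpq⟩⟩

theorem completionOptimal_isParetoOptimal_general
    (D : Set F) (Conf : Set (Set F))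
    (p : F → F → Prop) (R : Set F)
    (h : CompletionOptimal D Conf p R) : ParetoOptimal D Conf p R := by
  obtain ⟨p', ⟨-, hpp'⟩, hR⟩ := h
  exact hR.anti hpp'

/-- If `R` is a completion-optimal repair of a prioritized knowledge base,
then `R` is a Pareto-optimal repair. -/
theorem completionOptimal_isParetoOptimal
    (D : Set F) (hD : D.Finite) (Conf : Set (Set F))
    (p : F → F → Prop) (hp : IsPriority Conf p) (R : Set F)
    (h : CompletionOptimal D Conf p R) : ParetoOptimal D Conf p R :=
  completionOptimal_isParetoOptimal_general D Conf p R h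
end

section
/- The 'going up' cycle removal strategy produces a relation contained in the 'going down' strategy: ≻^u ⊆ ≻^d. -/
variable {F : Type*}

/-- Union of the priority levels `≻_1, …, ≻_k`. -/
def unionTo (prec : ℕ → F → F → Prop) (k : ℕ) : F → F → Prop :=
  fun a b => ∃ i, 1 ≤ i ∧ i ≤ k ∧ prec i a b

/-- The level of a pair: the minimal index `i` with `(a,b) ∈ ≻_i`. -/
noncomputable def levelOf (prec : ℕ → F → F → Prop) (a b : F) : ℕ :=
  sInf {i | prec i a b}

/-- Going up `≻^u`: the union `≻_1 ∪ … ∪ ≻_k` for the largest `k ≤ n` such that this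
union is acyclic (equivalently, membership in some acyclic prefix union, since
prefix unions are nested and subrelations of acyclic relations are acyclic). -/
def GoingUp (prec : ℕ → F → F → Prop) (n : ℕ) : F → F → Prop :=
  fun a b => ∃ k, k ≤ n ∧ Acyclic (unionTo prec k) ∧ unionTo prec k a b

/-- One step of the going down procedure: remove from `r` all pairs of level `i`
lying on a directed cycle of `r`. -/
noncomputable def goingDownStep (prec : ℕ → F → F → Prop) (i : ℕ)
    (r : F → F → Prop) : F → F → Prop :=
  fun a b => r a b ∧ ¬ (levelOf prec a b = i ∧ Relation.TransGen r b a)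

/-- Iteration of the going down procedure, removing level `n`, then `n-1`, etc.
(removals performed on an acyclic relation are no-ops, so the `while cyclic` guard
is immaterial). -/
noncomputable def goingDownAux (prec : ℕ → F → F → Prop) (n : ℕ) : ℕ → (F → F → Prop)
  | 0 => unionTo prec n
  | (j + 1) => goingDownStep prec (n - j) (goingDownAux prec n j)

/-- Going down `≻^d`. -/
noncomputable def GoingDown (prec : ℕ → F → F → Prop) (n : ℕ) : F → F → Prop :=
  goingDownAux prec n n

/-- Iteration of the refined going up procedure: start from `≻_1` minus the pairs on a
cycle w.r.t. `≻_1`; at stage `i ≥ 2`, add the pairs of level `i` that do not lie on any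
cycle w.r.t. the current relation united with `≻_i`. -/
noncomputable def refinedAux (prec : ℕ → F → F → Prop) : ℕ → (F → F → Prop)
  | 0 => fun a b => prec 1 a b ∧ ¬ Relation.TransGen (prec 1) b a
  | (j + 1) => fun a b => refinedAux prec j a b ∨
      (levelOf prec a b = j + 2 ∧ prec (j + 2) a b ∧
        ¬ Relation.TransGen (fun x y => refinedAux prec j x y ∨ prec (j + 2) x y) b a)

/-- Refined going up `≻^{ru}` (for levels `1, …, n`). -/
noncomputable def RefinedGoingUp (prec : ℕ → F → F → Prop) (n : ℕ) : F → F → Prop :=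
  refinedAux prec (n - 1)

lemma cycle_edges {r : F → F → Prop} {a : F} :
    ∀ {b}, Relation.TransGen r b a → Relation.TransGen r a b →
    Relation.TransGen (fun x y => r x y ∧ Relation.TransGen r y x) b a := by
  intro b hba
  induction hba using Relation.TransGen.head_induction_on with
  | single h => intro hab; exact .single ⟨h, hab⟩
  | head h hca ih =>
      intro hab
      exact Relation.TransGen.head ⟨h, hca.trans hab⟩ (ih (hab.tail h))

lemma levelOf_spec {prec : ℕ → F → F → Prop} {n : ℕ}
    (h0 : ∀ a b, ¬ prec 0 a b)
    {a b : F} (h : unionTo prec n a b) :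
    prec (levelOf prec a b) a b ∧ 1 ≤ levelOf prec a b ∧ levelOf prec a b ≤ n := by
  obtain ⟨i, h1, h2, h3⟩ := h
  have hne : {j | prec j a b}.Nonempty := ⟨i, h3⟩
  have hmem := Nat.sInf_mem hne
  refine ⟨hmem, ?_, le_trans (Nat.sInf_le h3) h2⟩
  rcases Nat.eq_zero_or_pos (sInf {j | prec j a b}) with h | h
  · exact absurd (h ▸ hmem) (h0 a b)
  · exact h

lemma down_subset (prec : ℕ → F → F → Prop) (n : ℕ) :
    ∀ j a b, goingDownAux prec n j a b → unionTo prec n a b := by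
  intro j
  induction j with
  | zero => exact fun a b h => h
  | succ j ih => exact fun a b h => ih a b h.1

lemma down_no_high_cycle {prec : ℕ → F → F → Prop} {n : ℕ}
    (h0 : ∀ a b, ¬ prec 0 a b) :
    ∀ j a b, goingDownAux prec n j a b → n - j < levelOf prec a b →
      ¬ Relation.TransGen (goingDownAux prec n j) b a := by
  intro j
  induction j with
  | zero =>
      intro a b h hlvl _
      have := (levelOf_spec h0 h).2.2
      omega
  | succ j ih =>
      intro a b h hlvl hcyc
      obtain ⟨h', hnot⟩ := h
      have hcyc' : Relation.TransGen (goingDownAux prec n j) b a :=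
        Relation.TransGen.mono (fun x y (hxy : goingDownAux prec n (j + 1) x y) => hxy.1) b a hcyc
      by_cases hgt : n - j < levelOf prec a b
      · exact ih a b h' hgt hcyc'
      · have hle : levelOf prec a b ≤ n := (levelOf_spec h0 (down_subset prec n j a b h')).2.2
        have : levelOf prec a b = n - j := by omega
        exact hnot ⟨this, hcyc'⟩

lemma up_subset_down {prec : ℕ → F → F → Prop} {n k : ℕ} (hk : k ≤ n)
    (h0 : ∀ a b, ¬ prec 0 a b) (hac : Acyclic (unionTo prec k)) :
    ∀ j a b, unionTo prec k a b → goingDownAux prec n j a b := by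
  intro j
  induction j with
  | zero =>
      rintro a b ⟨i, h1, h2, h3⟩
      exact ⟨i, h1, le_trans h2 hk, h3⟩
  | succ j ih =>
      intro a b h
      refine ⟨ih a b h, ?_⟩
      rintro ⟨hlvl, hcyc⟩
      have hab : goingDownAux prec n j a b := ih a b h
      have hs := cycle_edges hcyc (Relation.TransGen.single hab)
      have hlvlab : levelOf prec a b ≤ k := by
        obtain ⟨i, h1, h2, h3⟩ := h
        exact le_trans (Nat.sInf_le h3) h2
      have hmono : ∀ x y, (goingDownAux prec n j x y ∧
          Relation.TransGen (goingDownAux prec n j) y x) → unionTo prec k x y := by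
        rintro x y ⟨hxy, hyx⟩
        have hnh : ¬ (n - j < levelOf prec x y) := fun hgt =>
          down_no_high_cycle h0 j x y hxy hgt hyx
        obtain ⟨hp, h1, -⟩ := levelOf_spec h0 (down_subset prec n j x y hxy)
        exact ⟨levelOf prec x y, h1, by omega, hp⟩
      have : Relation.TransGen (unionTo prec k) b a := Relation.TransGen.mono hmono b a hs
      exact hac a ((Relation.TransGen.single h).trans this)

/-- The going up strategy produces a relation contained in the going down strategy:
`≻^u ⊆ ≻^d`. -/
theorem goingUp_subset_goingDown [Finite F]
    (prec : ℕ → F → F → Prop) (n : ℕ)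
    (h0 : ∀ a b, ¬ prec 0 a b)
    (hsupp : ∀ i, n < i → ∀ a b, ¬ prec i a b) :
    ∀ a b, GoingUp prec n a b → GoingDown prec n a b := by
  rintro a b ⟨k, hk, hac, h⟩
  exact up_subset_down hk h0 hac n a b h
end

section
/- The 'going down' strategy yields a relation contained in the 'refined going up' strategy: ≻^d ⊆ ≻^{ru}. -/
variable {F : Type*}

section Aux

variable (prec : ℕ → F → F → Prop) (n : ℕ)

lemma levelOf_le_of {i a b} (h : prec i a b) : levelOf prec a b ≤ i :=
  Nat.sInf_le h

lemma prec_levelOf {a b} (h : unionTo prec n a b) : prec (levelOf prec a b) a b := by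
  obtain ⟨i, _, _, hi⟩ := h
  exact Nat.sInf_mem (⟨i, hi⟩ : Set.Nonempty {i | prec i a b})

lemma levelOf_pos (h0 : ∀ a b, ¬ prec 0 a b) {a b} (h : unionTo prec n a b) :
    1 ≤ levelOf prec a b := by
  rcases Nat.eq_zero_or_pos (levelOf prec a b) with he | hp
  · exact absurd (he ▸ prec_levelOf prec n h) (h0 a b)
  · exact hp

lemma goingDownAux_le : ∀ {j k : ℕ}, j ≤ k → ∀ a b,
    goingDownAux prec n k a b → goingDownAux prec n j a b := by
  intro j k hjk
  induction hjk with
  | refl => exact fun a b h => h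
  | step _ ih => exact fun a b h => ih a b h.1

lemma goingDownAux_union {j a b} (h : goingDownAux prec n j a b) :
    unionTo prec n a b :=
  goingDownAux_le prec n (Nat.zero_le j) a b h

/-- Pairs of small level survive the first `j` going-down steps. -/
lemma survive : ∀ j, j ≤ n → ∀ a b, unionTo prec n a b →
    levelOf prec a b ≤ n - j → goingDownAux prec n j a b := by
  intro j
  induction j with
  | zero => exact fun _ a b hu _ => hu
  | succ j ih =>
    intro hjn a b hu hlev
    refine ⟨ih (by omega) a b hu (by omega), ?_⟩
    rintro ⟨hl, -⟩
    omega

/-- Core lemma: if `(a,b)` survives all of going down and has level `i`, then there is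
no path from `b` to `a` using only pairs of level `≤ i` from the union. -/
lemma no_cycle (h0 : ∀ a b, ¬ prec 0 a b) (i : ℕ) (hi1 : 1 ≤ i) (hin : i ≤ n)
    {a b} (hab : goingDownAux prec n n a b) (hlev : levelOf prec a b = i)
    (s : F → F → Prop)
    (hs : ∀ x y, s x y → unionTo prec n x y ∧ levelOf prec x y ≤ i) :
    ¬ Relation.TransGen s b a := by
  intro hcyc
  have hsub : ∀ x y, s x y → goingDownAux prec n (n - i) x y := by
    intro x y hxy
    exact survive prec n (n - i) (by omega) x y (hs x y hxy).1
      (by have := (hs x y hxy).2; omega)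
  have hcyc' : Relation.TransGen (goingDownAux prec n (n - i)) b a :=
    Relation.TransGen.mono hsub _ _ hcyc
  have hab' : goingDownAux prec n (n - i + 1) a b :=
    goingDownAux_le prec n (by omega) a b hab
  exact hab'.2 ⟨by omega, hcyc'⟩

lemma refinedAux_level (h0 : ∀ a b, ¬ prec 0 a b) (hn : 1 ≤ n) :
    ∀ j, j + 1 ≤ n → ∀ a b, refinedAux prec j a b →
      unionTo prec n a b ∧ levelOf prec a b ≤ j + 1 := by
  intro j
  induction j with
  | zero =>
    intro _ a b h
    exact ⟨⟨1, le_refl 1, hn, h.1⟩, levelOf_le_of prec h.1⟩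
  | succ j ih =>
    intro hjn a b h
    rcases h with h | ⟨hl, hp, -⟩
    · have := ih (by omega) a b h
      exact ⟨this.1, by omega⟩
    · exact ⟨⟨j + 2, by omega, hjn, hp⟩, by omega⟩

lemma main_claim (h0 : ∀ a b, ¬ prec 0 a b) (hn : 1 ≤ n) :
    ∀ j, j + 1 ≤ n → ∀ a b, goingDownAux prec n n a b →
      levelOf prec a b ≤ j + 1 → refinedAux prec j a b := by
  intro j
  induction j with
  | zero =>
    intro _ a b hab hlev
    have hu : unionTo prec n a b := goingDownAux_union prec n hab
    have h1 : levelOf prec a b = 1 := le_antisymm hlev (levelOf_pos prec n h0 hu)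
    have hp : prec 1 a b := h1 ▸ prec_levelOf prec n hu
    refine ⟨hp, no_cycle prec n h0 1 le_rfl hn hab h1 (prec 1) ?_⟩
    intro x y hxy
    exact ⟨⟨1, le_rfl, hn, hxy⟩, levelOf_le_of prec hxy⟩
  | succ j ih =>
    intro hjn a b hab hlev
    rcases Nat.lt_or_ge (levelOf prec a b) (j + 2) with hlt | hge
    · exact Or.inl (ih (by omega) a b hab (by omega))
    · have heq : levelOf prec a b = j + 2 := by omega
      have hu : unionTo prec n a b := goingDownAux_union prec n hab
      have hp : prec (j + 2) a b := heq ▸ prec_levelOf prec n hu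
      refine Or.inr ⟨heq, hp, no_cycle prec n h0 (j + 2) (by omega) hjn hab heq _ ?_⟩
      intro x y hxy
      rcases hxy with hxy | hxy
      · have := refinedAux_level prec n h0 hn j (by omega) x y hxy
        exact ⟨this.1, by omega⟩
      · exact ⟨⟨j + 2, by omega, hjn, hxy⟩, levelOf_le_of prec hxy⟩

end Aux

/-- The going down strategy yields a relation contained in the refined going up
strategy: `≻^d ⊆ ≻^{ru}`. -/
theorem goingDown_subset_refinedGoingUp [Finite F]
    (prec : ℕ → F → F → Prop) (n : ℕ) (hn : 1 ≤ n)
    (h0 : ∀ a b, ¬ prec 0 a b)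
    (hsupp : ∀ i, n < i → ∀ a b, ¬ prec i a b) :
    ∀ a b, GoingDown prec n a b → RefinedGoingUp prec n a b := by
  intro a b h
  have hu : unionTo prec n a b := goingDownAux_union prec n h
  obtain ⟨i, hi1, hin, hp⟩ := hu
  have hlev : levelOf prec a b ≤ n := le_trans (levelOf_le_of prec hp) hin
  exact main_claim prec n h0 hn (n - 1) (by omega) a b h (by omega)
end

section
/- A pair (α,β) belongs to the 'going up' relation ≻^u if and only if the corresponding fact R(id(α),id(β)) belongs to the possibilistic repair of the cycle knowledge base K^cy, i.e., if and only if level(α,β) < inc, where inc is the minimal index i such that ≻_1 ∪ … ∪ ≻_i contains a directed cycle. -/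
variable {F : Type*}

-- The inconsistency degree: the minimal `i` such that `≻_1 ∪ … ∪ ≻_i` is cyclic,
-- and `n + 1` if no such `i` exists.
open Classical in
noncomputable def incDegree (prec : ℕ → F → F → Prop) (n : ℕ) : ℕ :=
  if ∃ i, ¬ Acyclic (unionTo prec i) then sInf {i | ¬ Acyclic (unionTo prec i)}
  else n + 1

lemma acyclic_mono' {r s : F → F → Prop} (h : ∀ a b, r a b → s a b)
    (hs : Acyclic s) : Acyclic r :=
  fun a ha => hs a (Relation.TransGen.mono h a a ha)

lemma unionTo_mono' (prec : ℕ → F → F → Prop) {j k : ℕ} (h : j ≤ k) :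
    ∀ a b, unionTo prec j a b → unionTo prec k a b := by
  rintro a b ⟨i, h1, h2, h3⟩
  exact ⟨i, h1, h2.trans h, h3⟩

/-- Possibilistic characterization of going up: `(a,b) ∈ ≻^u` iff `(a,b)` is a
preference statement (`(a,b) ∈ ≻_Σ`, i.e. the fact `R(id a, id b)` belongs to the
cycle KB) whose level is strictly below the inconsistency degree, i.e. iff
`R(id a, id b)` belongs to the possibilistic repair of the cycle KB. -/
theorem goingUp_iff_possibilistic [Finite F]
    (prec : ℕ → F → F → Prop) (n : ℕ)
    (h0 : ∀ a b, ¬ prec 0 a b)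
    (hsupp : ∀ i, n < i → ∀ a b, ¬ prec i a b) :
    ∀ a b, GoingUp prec n a b ↔
      unionTo prec n a b ∧ levelOf prec a b < incDegree prec n := by
  intro a b
  constructor
  · rintro ⟨k, hkn, hac, hab⟩
    obtain ⟨i, h1i, hik, hpi⟩ := hab
    refine ⟨⟨i, h1i, le_trans hik hkn, hpi⟩, ?_⟩
    have hlev : levelOf prec a b ≤ k := le_trans (Nat.sInf_le hpi) hik
    unfold incDegree
    split
    · next hex =>
      have hmem : ¬ Acyclic (unionTo prec (sInf {i | ¬ Acyclic (unionTo prec i)})) :=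
        Nat.sInf_mem hex
      have hklt : k < sInf {i | ¬ Acyclic (unionTo prec i)} := by
        by_contra hcon
        push_neg at hcon
        exact hmem (acyclic_mono' (unionTo_mono' prec hcon) hac)
      exact lt_of_le_of_lt hlev hklt
    · exact lt_of_le_of_lt (le_trans hlev hkn) (Nat.lt_succ_self n)
  · rintro ⟨⟨i, h1i, hin, hpi⟩, hlev⟩
    have hne : {j | prec j a b}.Nonempty := ⟨i, hpi⟩
    have hm : prec (levelOf prec a b) a b := Nat.sInf_mem hne
    set m := levelOf prec a b with hmdef
    have hm1 : 1 ≤ m := by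
      rcases Nat.eq_zero_or_pos m with h | h
      · exact absurd (h ▸ hm) (h0 a b)
      · exact h
    have hmn : m ≤ n := by
      by_contra h
      push_neg at h
      exact hsupp m h a b hm
    refine ⟨m, hmn, ?_, ⟨m, hm1, le_refl m, hm⟩⟩
    unfold incDegree at hlev
    split at hlev
    · exact not_not.mp (Nat.notMem_of_lt_sInf hlev)
    · next hex =>
      push_neg at hex
      exact hex m
end

section
/- A pair (α,β) belongs to the 'going down' relation ≻^d if and only if, with i = level(α,β), the pair (α,β) does not lie on any directed cycle of the relation ≻_1 ∪ … ∪ ≻_i (the non-defeated characterization). -/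
variable {F : Type*}

section AuxLemmas

variable {prec : ℕ → F → F → Prop}

lemma levelOf_le_of_unionTo {m : ℕ} {a b : F} (h : unionTo prec m a b) :
    levelOf prec a b ≤ m := by
  obtain ⟨i, _, him, hp⟩ := h
  exact le_trans (Nat.sInf_le hp) him

lemma unionTo_of_level (h0 : ∀ a b, ¬ prec 0 a b) {n m : ℕ} {a b : F}
    (h : unionTo prec n a b) (hm : levelOf prec a b ≤ m) : unionTo prec m a b := by
  obtain ⟨i, h1, him, hp⟩ := h
  have hmem : prec (levelOf prec a b) a b := Nat.sInf_mem (⟨i, hp⟩ : Set.Nonempty {k | prec k a b})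
  refine ⟨levelOf prec a b, ?_, hm, hmem⟩
  by_contra hc
  have h0' : levelOf prec a b = 0 := by omega
  exact h0 a b (h0' ▸ hmem)

lemma transGen_sub {S P : F → F → Prop} {a : F}
    (hP : ∀ u v, S u v → P u v → ¬ Relation.TransGen S v u) :
    ∀ c, Relation.TransGen S c a → Relation.TransGen S a c →
      Relation.TransGen (fun u v => S u v ∧ ¬ P u v) c a := by
  intro c hca
  induction hca using Relation.TransGen.head_induction_on with
  | single h => exact fun hac => .single ⟨h, fun hp => hP _ _ h hp hac⟩
  | head h hta ih =>
      intro hac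
      exact .head ⟨h, fun hp => hP _ _ h hp (hta.trans hac)⟩ (ih (hac.tail h))

lemma goingDown_invariant (h0 : ∀ a b, ¬ prec 0 a b) (n : ℕ) :
    ∀ j, j ≤ n → ∀ a b, goingDownAux prec n j a b ↔
      unionTo prec n a b ∧ (n - j < levelOf prec a b →
        ¬ Relation.TransGen (unionTo prec (levelOf prec a b)) b a) := by
  intro j
  induction j with
  | zero =>
      intro _ a b
      simp only [goingDownAux, Nat.sub_zero]
      refine ⟨fun h => ⟨h, fun hlt _ => ?_⟩, fun h => h.1⟩
      · have := levelOf_le_of_unionTo h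
        omega
  | succ j IH =>
      intro hjn a b
      have hIH := IH (by omega)
      have hRsub : ∀ x y, goingDownAux prec n j x y → unionTo prec n x y :=
        fun x y h => ((hIH x y).mp h).1
      -- union up to level `n - j` is contained in the current relation
      have hUmR : ∀ x y, unionTo prec (n - j) x y → goingDownAux prec n j x y := by
        intro x y h
        have hle : levelOf prec x y ≤ n - j := levelOf_le_of_unionTo h
        obtain ⟨i, h1, him, hp⟩ := h
        refine (hIH x y).mpr ⟨⟨i, h1, by omega, hp⟩, fun hlt => ?_⟩
        omega
      -- key lemma: a pair of level `n - j` on a cycle of the current relation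
      -- lies on a cycle of `unionTo prec (n - j)`
      have hkey : ∀ x y, goingDownAux prec n j x y → levelOf prec x y = n - j →
          Relation.TransGen (goingDownAux prec n j) y x →
          Relation.TransGen (unionTo prec (n - j)) y x := by
        intro x y hxy hl hyx
        have hstep : ∀ d, Relation.TransGen
            (fun u v => goingDownAux prec n j u v ∧ levelOf prec u v ≤ n - j + d) y x →
            Relation.TransGen (unionTo prec (n - j)) y x := by
          intro d
          induction d with
          | zero =>
              intro h
              refine Relation.TransGen.mono (fun u v hv => ?_) _ _ h
              exact unionTo_of_level h0 (hRsub u v hv.1) (by omega)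
          | succ d IHd =>
              intro h
              set m := n - j + d + 1 with hm
              have hSsub : ∀ u v, (goingDownAux prec n j u v ∧ levelOf prec u v ≤ m) →
                  unionTo prec m u v :=
                fun u v hv => unionTo_of_level h0 (hRsub u v hv.1) hv.2
              have hP : ∀ u v, (goingDownAux prec n j u v ∧ levelOf prec u v ≤ m) →
                  levelOf prec u v = m →
                  ¬ Relation.TransGen
                    (fun u v => goingDownAux prec n j u v ∧ levelOf prec u v ≤ m) v u := by
                intro u v hv hlv hTG
                have hcyc : Relation.TransGen (unionTo prec m) v u :=
                  Relation.TransGen.mono hSsub _ _ hTG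
                have := ((hIH u v).mp hv.1).2 (by omega)
                rw [hlv] at this
                exact this hcyc
              have hxy' : Relation.TransGen
                  (fun u v => goingDownAux prec n j u v ∧ levelOf prec u v ≤ m) x y :=
                .single ⟨hxy, by omega⟩
              have := transGen_sub hP y h hxy'
              refine IHd (Relation.TransGen.mono (fun u v hv => ⟨hv.1.1, ?_⟩) _ _ this)
              have := hv.1.2
              have := hv.2
              omega
        have hn : n - j + j = n := by omega
        refine hstep j (Relation.TransGen.mono (fun u v hv => ⟨hv, ?_⟩) _ _ hyx)
        rw [hn]
        exact levelOf_le_of_unionTo (hRsub u v hv)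
      show goingDownStep prec (n - j) (goingDownAux prec n j) a b ↔ _
      unfold goingDownStep
      rw [hIH a b]
      constructor
      · rintro ⟨⟨hU, hc⟩, hnot⟩
        refine ⟨hU, fun hlt hTG => ?_⟩
        rcases lt_or_ge (n - j) (levelOf prec a b) with h | h
        · exact hc h hTG
        · have hl : levelOf prec a b = n - j := by omega
          rw [hl] at hTG
          exact hnot ⟨hl, Relation.TransGen.mono hUmR _ _ hTG⟩
      · rintro ⟨hU, hc⟩
        refine ⟨⟨hU, fun hlt => hc (by omega)⟩, ?_⟩
        rintro ⟨hl, hTG⟩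
        have h1 : n - (j + 1) < levelOf prec a b := by omega
        have := hc h1
        rw [hl] at this
        exact this (hkey a b ((hIH a b).mpr
          ⟨hU, fun hlt => hc (by omega)⟩) hl hTG)

end AuxLemmas

/-- Non-defeated characterization of going down: `(a,b) ∈ ≻^d` iff `(a,b)` is a
preference statement that does not lie on any directed cycle of
`≻_1 ∪ … ∪ ≻_{level(a,b)}`. -/
theorem goingDown_iff_nonDefeated [Finite F]
    (prec : ℕ → F → F → Prop) (n : ℕ)
    (h0 : ∀ a b, ¬ prec 0 a b)
    (hsupp : ∀ i, n < i → ∀ a b, ¬ prec i a b) :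
    ∀ a b, GoingDown prec n a b ↔
      unionTo prec n a b ∧
        ¬ Relation.TransGen (unionTo prec (levelOf prec a b)) b a := by
  intro a b
  have h := goingDown_invariant h0 n n le_rfl a b
  rw [Nat.sub_self] at h
  unfold GoingDown
  rw [h]
  constructor
  · rintro ⟨hU, hc⟩
    refine ⟨hU, hc ?_⟩
    obtain ⟨i, h1, him, hp⟩ := hU
    have hmem : prec (levelOf prec a b) a b := Nat.sInf_mem (⟨i, hp⟩ : Set.Nonempty {k | prec k a b})
    by_contra hc'
    have h0' : levelOf prec a b = 0 := by omega
    exact h0 a b (h0' ▸ hmem)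
  · rintro ⟨hU, hc⟩
    exact ⟨hU, fun _ => hc⟩
end

section
/- There exist level-partitioned preference relations for which the grounded relation ≻^g is strictly contained in the refined going up relation ≻^{ru}. Concretely, on four elements a,b,c,d with ≻_1 = {(a,b),(c,d)}, ≻_2 = {(b,c),(d,a)}, ≻_3 = {(c,b)}, one has ≻^{ru} = {(a,b),(c,d),(c,b)} and ≻^g = {(a,b),(c,d)}. -/
variable {F : Type*}

/-- `c` is a directed cycle of the relation `s`, given as a nonempty list of edges of `s`
in which consecutive edges are adjacent and the last edge leads back to the first. -/
def IsCycleList (s : F → F → Prop) (c : List (F × F)) : Prop :=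
  c ≠ [] ∧ (∀ e ∈ c, s e.1 e.2) ∧ List.Chain' (fun e f => e.2 = f.1) c ∧
    (c.getLast?).map Prod.snd = (c.head?).map Prod.fst

/-- One step of the grounded construction: add every pair `(a,b) ∈ ≻_Σ` such that every
directed cycle `c` of `≻_Σ` through `(a,b)` either contains a pair of strictly greater
level than `(a,b)`, or contains a pair `e` with `S ∪ {e}` cyclic. -/
noncomputable def groundedStep (prec : ℕ → F → F → Prop) (n : ℕ)
    (S : F → F → Prop) : F → F → Prop :=
  fun a b => unionTo prec n a b ∧
    ∀ c : List (F × F), IsCycleList (unionTo prec n) c → (a, b) ∈ c →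
      (∃ e ∈ c, levelOf prec a b < levelOf prec e.1 e.2) ∨
      (∃ e ∈ c, ¬ Acyclic (fun x y => S x y ∨ (x, y) = e))

/-- The grounded relation `≻^g`: the least fixpoint (reached by iterating
`groundedStep` from the empty relation). -/
noncomputable def Grounded (prec : ℕ → F → F → Prop) (n : ℕ) : F → F → Prop :=
  fun a b => ∀ S : F → F → Prop, (∀ x y, groundedStep prec n S x y → S x y) → S a b

/-- The three level-partitioned preference relations of the example
(on `a = 0, b = 1, c = 2, d = 3`). -/
def prec10 : ℕ → Fin 4 → Fin 4 → Prop
  | 1 => fun x y => (x, y) = ((0 : Fin 4), (1 : Fin 4)) ∨ (x, y) = (2, 3)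
  | 2 => fun x y => (x, y) = ((1 : Fin 4), (2 : Fin 4)) ∨ (x, y) = (3, 0)
  | 3 => fun x y => (x, y) = ((2 : Fin 4), (1 : Fin 4))
  | _ => fun _ _ => False


/- ### Auxiliary lemmas -/

lemma transGen_lt {r : F → F → Prop} {f : F → ℕ}
    (h : ∀ x y, r x y → f y < f x) {x y : F} (h' : Relation.TransGen r x y) : f y < f x := by
  induction h' with
  | single h1 => exact h _ _ h1
  | tail _ h2 ih => exact (h _ _ h2).trans ih

lemma acyclic_of_rank {r : F → F → Prop} (f : F → ℕ)
    (h : ∀ x y, r x y → f y < f x) : Acyclic r :=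
  fun _ ha => lt_irrefl _ (transGen_lt h ha)

lemma cycle_pred {s : F → F → Prop} {c : List (F × F)} (hc : IsCycleList s c)
    {e : F × F} (he : e ∈ c) : ∃ f ∈ c, f.2 = e.1 := by
  obtain ⟨hne, _, hch, hwrap⟩ := hc
  obtain ⟨⟨i, hi⟩, rfl⟩ := List.mem_iff_get.mp he
  rcases i with _ | j
  · refine ⟨c.getLast hne, List.getLast_mem hne, ?_⟩
    rw [List.getLast?_eq_getLast hne, List.head?_eq_head hne] at hwrap
    have h2 : c.head hne = c.get ⟨0, hi⟩ := by
      cases c with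
      | nil => exact absurd rfl hne
      | cons a l => rfl
    simpa [h2] using hwrap
  · exact ⟨c.get ⟨j, by omega⟩, List.get_mem _ _,
      List.isChain_iff_getElem.mp hch j (by omega)⟩

lemma cycle_succ {s : F → F → Prop} {c : List (F × F)} (hc : IsCycleList s c)
    {e : F × F} (he : e ∈ c) : ∃ f ∈ c, f.1 = e.2 := by
  obtain ⟨hne, _, hch, hwrap⟩ := hc
  obtain ⟨⟨i, hi⟩, rfl⟩ := List.mem_iff_get.mp he
  by_cases h : i + 1 < c.length
  · exact ⟨c.get ⟨i + 1, h⟩, List.get_mem _ _,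
      (List.isChain_iff_getElem.mp hch i (by omega)).symm⟩
  · refine ⟨c.head hne, List.head_mem hne, ?_⟩
    rw [List.getLast?_eq_getLast hne, List.head?_eq_head hne] at hwrap
    have h2 : c.getLast hne = c.get ⟨i, hi⟩ := by
      rw [List.getLast_eq_getElem, List.get_eq_getElem]; congr 1; simp only; omega
    rw [h2] at hwrap
    simpa using hwrap.symm

lemma prec10_iff (i : ℕ) (x y : Fin 4) :
    prec10 i x y ↔ (i = 1 ∧ ((x,y) = ((0:Fin 4),(1:Fin 4)) ∨ (x,y) = (2,3))) ∨
      (i = 2 ∧ ((x,y) = ((1:Fin 4),(2:Fin 4)) ∨ (x,y) = (3,0))) ∨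
      (i = 3 ∧ (x,y) = ((2:Fin 4),(1:Fin 4))) := by
  rcases i with _|_|_|_|i <;> simp [prec10]

lemma level01 : levelOf prec10 0 1 = 1 := by
  have h : {i | prec10 i (0:Fin 4) 1} = {1} := by
    ext i; rcases i with _|_|_|_|i <;> simp [prec10]
  rw [levelOf, h, csInf_singleton]

lemma level23 : levelOf prec10 2 3 = 1 := by
  have h : {i | prec10 i (2:Fin 4) 3} = {1} := by
    ext i; rcases i with _|_|_|_|i <;> simp [prec10]
  rw [levelOf, h, csInf_singleton]

lemma level12 : levelOf prec10 1 2 = 2 := by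
  have h : {i | prec10 i (1:Fin 4) 2} = {2} := by
    ext i; rcases i with _|_|_|_|i <;> simp [prec10]
  rw [levelOf, h, csInf_singleton]

lemma level30 : levelOf prec10 3 0 = 2 := by
  have h : {i | prec10 i (3:Fin 4) 0} = {2} := by
    ext i; rcases i with _|_|_|_|i <;> simp [prec10]
  rw [levelOf, h, csInf_singleton]

lemma level21 : levelOf prec10 2 1 = 3 := by
  have h : {i | prec10 i (2:Fin 4) 1} = {3} := by
    ext i; rcases i with _|_|_|_|i <;> simp [prec10]
  rw [levelOf, h, csInf_singleton]

lemma unionTo_iff (x y : Fin 4) : unionTo prec10 3 x y ↔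
    ((x,y) = ((0:Fin 4),(1:Fin 4)) ∨ (x,y) = (2,3) ∨ (x,y) = ((1:Fin 4),(2:Fin 4)) ∨
      (x,y) = (3,0) ∨ (x,y) = ((2:Fin 4),(1:Fin 4))) := by
  constructor
  · rintro ⟨i, h1, h2, h⟩
    interval_cases i <;> simp [prec10, Prod.ext_iff] at h ⊢ <;> tauto
  · rintro (h|h|h|h|h)
    · exact ⟨1, le_refl _, by norm_num, by simp [prec10, h]⟩
    · exact ⟨1, le_refl _, by norm_num, by simp [prec10, h]⟩
    · exact ⟨2, by norm_num, by norm_num, by simp [prec10, h]⟩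
    · exact ⟨2, by norm_num, by norm_num, by simp [prec10, h]⟩
    · exact ⟨3, by norm_num, by norm_num, by simp [prec10, h]⟩

lemma refinedAux0_iff (x y : Fin 4) : refinedAux prec10 0 x y ↔
    ((x,y) = ((0:Fin 4),(1:Fin 4)) ∨ (x,y) = (2,3)) := by
  have hac : Acyclic (prec10 1) := by
    refine acyclic_of_rank ![1, 0, 1, 0] ?_
    intro a b h
    rcases h with h | h <;> rw [Prod.ext_iff] at h <;> obtain ⟨rfl, rfl⟩ := h <;> decide
  constructor
  · rintro ⟨h, -⟩; exact h
  · intro h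
    refine ⟨by simpa [prec10] using h, fun hcyc => ?_⟩
    rcases h with h | h <;> rw [Prod.ext_iff] at h <;> obtain ⟨rfl, rfl⟩ := h <;>
      exact absurd (Relation.TransGen.head (by simp [prec10]) hcyc) (hac _)

lemma refinedAux1_iff (x y : Fin 4) : refinedAux prec10 1 x y ↔
    ((x,y) = ((0:Fin 4),(1:Fin 4)) ∨ (x,y) = (2,3)) := by
  set R : Fin 4 → Fin 4 → Prop := fun a b => refinedAux prec10 0 a b ∨ prec10 2 a b with hR
  have hR01 : R 0 1 := Or.inl ((refinedAux0_iff 0 1).mpr (Or.inl rfl))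
  have hR23 : R 2 3 := Or.inl ((refinedAux0_iff 2 3).mpr (Or.inr rfl))
  have hR12 : R 1 2 := Or.inr (by simp [prec10])
  have hR30 : R 3 0 := Or.inr (by simp [prec10])
  constructor
  · rintro (h | ⟨-, h, hnc⟩)
    · exact (refinedAux0_iff x y).mp h
    · exfalso
      rcases h with h | h <;> rw [Prod.ext_iff] at h <;> obtain ⟨rfl, rfl⟩ := h
      · exact hnc (Relation.TransGen.head hR23 (Relation.TransGen.head hR30
          (Relation.TransGen.single hR01)))
      · exact hnc (Relation.TransGen.head hR01 (Relation.TransGen.head hR12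
          (Relation.TransGen.single hR23)))
  · intro h
    exact Or.inl ((refinedAux0_iff x y).mpr h)

lemma refinedAux2_iff (x y : Fin 4) : refinedAux prec10 2 x y ↔
    ((x,y) = ((0:Fin 4),(1:Fin 4)) ∨ (x,y) = (2,3) ∨ (x,y) = (2,1)) := by
  constructor
  · rintro (h | ⟨-, h, -⟩)
    · rcases (refinedAux1_iff x y).mp h with h | h
      · exact Or.inl h
      · exact Or.inr (Or.inl h)
    · exact Or.inr (Or.inr (by simpa [prec10] using h))
  · rintro (h | h | h)
    · exact Or.inl ((refinedAux1_iff x y).mpr (Or.inl h))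
    · exact Or.inl ((refinedAux1_iff x y).mpr (Or.inr h))
    · rw [Prod.ext_iff] at h; obtain ⟨rfl, rfl⟩ := h
      refine Or.inr ⟨level21, by simp [prec10], fun hcyc => ?_⟩
      have hmono : ∀ a b : Fin 4, (refinedAux prec10 1 a b ∨ prec10 3 a b) →
          (![2, 0, 3, 0] : Fin 4 → ℕ) b < ![2, 0, 3, 0] a := by
        intro a b h
        rcases h with h | h
        · rcases (refinedAux1_iff a b).mp h with h | h <;> rw [Prod.ext_iff] at h <;>
            obtain ⟨rfl, rfl⟩ := h <;> decide
        · rw [show prec10 3 a b = ((a,b) = ((2:Fin 4),(1:Fin 4))) from rfl, Prod.ext_iff] at h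
          obtain ⟨rfl, rfl⟩ := h; decide
      exact absurd (transGen_lt hmono hcyc) (by decide)

/-- The candidate grounded relation. -/
def Sg : Fin 4 → Fin 4 → Prop := fun x y => (x,y) = ((0:Fin 4),(1:Fin 4)) ∨ (x,y) = (2,3)

lemma acyclic_Sg_union (e : Fin 4 × Fin 4)
    (he : e = ((0:Fin 4),(1:Fin 4)) ∨ e = (2,3) ∨ e = ((1:Fin 4),(2:Fin 4)) ∨
      e = (3,0) ∨ e = ((2:Fin 4),(1:Fin 4))) :
    Acyclic (fun x y => Sg x y ∨ (x, y) = e) := by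
  rcases he with rfl | rfl | rfl | rfl | rfl
  · refine acyclic_of_rank ![1, 0, 1, 0] ?_
    rintro a b ((h | h) | h) <;> rw [Prod.ext_iff] at h <;> obtain ⟨rfl, rfl⟩ := h <;> decide
  · refine acyclic_of_rank ![1, 0, 1, 0] ?_
    rintro a b ((h | h) | h) <;> rw [Prod.ext_iff] at h <;> obtain ⟨rfl, rfl⟩ := h <;> decide
  · refine acyclic_of_rank ![3, 2, 1, 0] ?_
    rintro a b ((h | h) | h) <;> rw [Prod.ext_iff] at h <;> obtain ⟨rfl, rfl⟩ := h <;> decide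
  · refine acyclic_of_rank ![1, 0, 3, 2] ?_
    rintro a b ((h | h) | h) <;> rw [Prod.ext_iff] at h <;> obtain ⟨rfl, rfl⟩ := h <;> decide
  · refine acyclic_of_rank ![1, 0, 2, 0] ?_
    rintro a b ((h | h) | h) <;> rw [Prod.ext_iff] at h <;> obtain ⟨rfl, rfl⟩ := h <;> decide

/-- The 4-cycle. -/
def c4 : List (Fin 4 × Fin 4) := [(1,2), (2,3), (3,0), (0,1)]

lemma c4_cycle : IsCycleList (unionTo prec10 3) c4 := by
  refine ⟨by simp [c4], ?_, ?_, ?_⟩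
  · intro e he
    fin_cases he <;> rw [unionTo_iff] <;> simp
  · simp [c4, List.Chain', List.isChain_cons_cons]
  · simp [c4]

/-- The 2-cycle. -/
def c2 : List (Fin 4 × Fin 4) := [(2,1), (1,2)]

lemma c2_cycle : IsCycleList (unionTo prec10 3) c2 := by
  refine ⟨by simp [c2], ?_, ?_, ?_⟩
  · intro e he
    fin_cases he <;> rw [unionTo_iff] <;> simp
  · simp [c2, List.Chain', List.isChain_cons_cons]
  · simp [c2]

lemma groundedStep_Sg : ∀ x y, groundedStep prec10 3 Sg x y → Sg x y := by
  intro x y ⟨hu, hcyc⟩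
  rcases (unionTo_iff x y).mp hu with h | h | h | h | h
  · exact Or.inl h
  · exact Or.inr h
  all_goals exfalso
  · -- (1,2) : use the 4-cycle
    rw [Prod.ext_iff] at h; obtain ⟨rfl, rfl⟩ := h
    rcases hcyc c4 c4_cycle (by simp [c4]) with ⟨e, he, hlt⟩ | ⟨e, he, hna⟩
    · fin_cases he <;>
        simp only [level12, level23, level30, level01] at hlt <;> omega
    · refine hna (acyclic_Sg_union e ?_)
      fin_cases he <;> simp
  · -- (3,0) : use the 4-cycle
    rw [Prod.ext_iff] at h; obtain ⟨rfl, rfl⟩ := h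
    rcases hcyc c4 c4_cycle (by simp [c4]) with ⟨e, he, hlt⟩ | ⟨e, he, hna⟩
    · fin_cases he <;>
        simp only [level12, level23, level30, level01] at hlt <;> omega
    · refine hna (acyclic_Sg_union e ?_)
      fin_cases he <;> simp
  · -- (2,1) : use the 2-cycle
    rw [Prod.ext_iff] at h; obtain ⟨rfl, rfl⟩ := h
    rcases hcyc c2 c2_cycle (by simp [c2]) with ⟨e, he, hlt⟩ | ⟨e, he, hna⟩
    · fin_cases he <;>
        simp only [level21, level12] at hlt <;> omega
    · refine hna (acyclic_Sg_union e ?_)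
      fin_cases he <;> simp

lemma grounded_iff (x y : Fin 4) : Grounded prec10 3 x y ↔
    ((x,y) = ((0:Fin 4),(1:Fin 4)) ∨ (x,y) = (2,3)) := by
  constructor
  · intro h
    exact h Sg groundedStep_Sg
  · intro h S hS
    apply hS
    rcases h with h | h <;> rw [Prod.ext_iff] at h <;> obtain ⟨rfl, rfl⟩ := h
    · refine ⟨(unionTo_iff 0 1).mpr (Or.inl rfl), fun c hc hmem => ?_⟩
      obtain ⟨f, hf, hf2⟩ := cycle_pred hc hmem
      have hfu := (unionTo_iff f.1 f.2).mp (hc.2.1 f hf)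
      have hf30 : f = (3, 0) := by
        obtain ⟨f1, f2⟩ := f
        simp only at hf2
        subst hf2
        rcases hfu with h' | h' | h' | h' | h' <;> rw [Prod.ext_iff] at h' <;>
          simp_all <;> first | rfl | (exfalso; revert h'; decide)
      refine Or.inl ⟨f, hf, ?_⟩
      rw [hf30, level01]
      rw [show ((3,0) : Fin 4 × Fin 4).1 = 3 from rfl, show ((3,0) : Fin 4 × Fin 4).2 = 0 from rfl,
        level30]
      omega
    · refine ⟨(unionTo_iff 2 3).mpr (Or.inr (Or.inl rfl)), fun c hc hmem => ?_⟩
      obtain ⟨f, hf, hf1⟩ := cycle_succ hc hmem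
      have hfu := (unionTo_iff f.1 f.2).mp (hc.2.1 f hf)
      have hf30 : f = (3, 0) := by
        obtain ⟨f1, f2⟩ := f
        simp only at hf1
        subst hf1
        rcases hfu with h' | h' | h' | h' | h' <;> rw [Prod.ext_iff] at h' <;>
          simp_all <;> first | rfl | (exfalso; revert h'; decide)
      refine Or.inl ⟨f, hf, ?_⟩
      rw [hf30, level23]
      rw [show ((3,0) : Fin 4 × Fin 4).1 = 3 from rfl, show ((3,0) : Fin 4 × Fin 4).2 = 0 from rfl,
        level30]
      omega


/-- With `≻_1 = {(a,b),(c,d)}`, `≻_2 = {(b,c),(d,a)}`, `≻_3 = {(c,b)}` one has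
`≻^{ru} = {(a,b),(c,d),(c,b)}` and `≻^g = {(a,b),(c,d)}`, so `≻^g ⊊ ≻^{ru}`. -/
theorem grounded_strictly_contained_in_refined :
    (∀ x y : Fin 4, RefinedGoingUp prec10 3 x y ↔
      ((x, y) = ((0 : Fin 4), (1 : Fin 4)) ∨ (x, y) = (2, 3) ∨ (x, y) = (2, 1))) ∧
    (∀ x y : Fin 4, Grounded prec10 3 x y ↔
      ((x, y) = ((0 : Fin 4), (1 : Fin 4)) ∨ (x, y) = (2, 3))) ∧
    (∀ x y : Fin 4, Grounded prec10 3 x y → RefinedGoingUp prec10 3 x y) ∧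
    ¬ (∀ x y : Fin 4, RefinedGoingUp prec10 3 x y → Grounded prec10 3 x y) := by
  
  have hru : ∀ x y : Fin 4, RefinedGoingUp prec10 3 x y ↔
      ((x, y) = ((0 : Fin 4), (1 : Fin 4)) ∨ (x, y) = (2, 3) ∨ (x, y) = (2, 1)) := by
    intro x y
    exact refinedAux2_iff x y
  refine ⟨hru, grounded_iff, ?_, ?_⟩
  · intro x y h
    rcases (grounded_iff x y).mp h with h | h
    · exact (hru x y).mpr (Or.inl h)
    · exact (hru x y).mpr (Or.inr (Or.inl h))
  · intro h
    have h21 : Grounded prec10 3 2 1 := h 2 1 ((hru 2 1).mpr (Or.inr (Or.inr rfl)))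
    have := (grounded_iff 2 1).mp h21
    rcases this with h' | h' <;> rw [Prod.ext_iff] at h' <;> exact absurd h' (by decide)
end

section
/- If the conflicts of a knowledge base all have size at most 2 and the priority relation is total, then there is exactly one Pareto-optimal repair. -/
variable {F : Type*}

/-! With binary conflicts a set is consistent exactly when no two of its facts are related by the
total priority `≻`, so a Pareto-optimal repair `R` is a fixpoint `R = {x ∈ D | no y ∈ R has y ≻ x}`:
a fact `x ∉ R` not attacked from `R` could be added after discarding the facts it beats, which is a
Pareto improvement. Conversely such a fixpoint is a Pareto-optimal repair, because an improving
fact is attacked by some `y ∈ R` that the improvement must discard, which would close a cycle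
`y ≻ β ≻ y`. On a finite `D` the acyclic `≻` is well-founded, and a fixpoint of this kind is then
unique (by well-founded induction) and exists (by well-founded recursion). -/

def BinaryConflicts (D : Set F) (Conf : Set (Set F)) : Prop :=
  ∀ C ∈ Conf, C ⊆ D ∧ ∃ a b, a ≠ b ∧ C = {a, b}

/-- The paper's "set of facts not attacked": a stable extension of the attack relation `p` on `D`
in the sense of argumentation frameworks. -/
def IsStableExtension (D : Set F) (p : F → F → Prop) (R : Set F) : Prop :=
  ∀ x, x ∈ R ↔ x ∈ D ∧ ∀ y, p y x → y ∉ R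

theorem Acyclic.irrefl {r : F → F → Prop} (hr : Acyclic r) (a : F) : ¬ r a a :=
  fun h => hr a (.single h)

theorem Acyclic.wellFounded_of_finite {r : F → F → Prop} {D : Set F} (hr : Acyclic r)
    (hD : D.Finite) (hdom : ∀ a b, r a b → a ∈ D) : WellFounded r := by
  -- `r` strictly shrinks the finite set of `r`-ancestors in `D`
  let ancestors (x : F) : Set F := {d | d ∈ D ∧ Relation.TransGen r d x}
  refine Subrelation.wf (fun {a b} hab => ?_) (measure fun x => (ancestors x).ncard).wf
  have hsub : ancestors a ⊂ ancestors b :=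
    ⟨fun d ⟨hdD, hda⟩ => ⟨hdD, hda.tail hab⟩,
      fun h => hr a (h ⟨hdom a b hab, .single hab⟩).2⟩
  exact Set.ncard_lt_ncard hsub (hD.subset fun d hd => hd.1)

theorem exists_isStableExtension {p : F → F → Prop} (hwf : WellFounded p) (D : Set F) :
    ∃ R, IsStableExtension D p R :=
  ⟨{x | hwf.fix (fun x ih => x ∈ D ∧ ∀ y (h : p y x), ¬ ih y h) x}, fun x =>
    Iff.of_eq (hwf.fix_eq _ x)⟩

theorem IsStableExtension.eq {D : Set F} {p : F → F → Prop} {R₁ R₂ : Set F}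
    (hwf : WellFounded p) (h₁ : IsStableExtension D p R₁) (h₂ : IsStableExtension D p R₂) :
    R₁ = R₂ := by
  ext x
  induction x using hwf.induction with
  | _ x ih =>
    rw [h₁ x, h₂ x]
    exact and_congr_right' (forall₂_congr fun y hyx => not_congr (ih y hyx))

section BinaryTotal

variable {D : Set F} {Conf : Set (Set F)} {p : F → F → Prop}

theorem BinaryConflicts.pair_mem (hbin : BinaryConflicts D Conf) (hp : IsPriority Conf p)
    {a b : F} (hab : p a b) : {a, b} ∈ Conf := by
  obtain ⟨C, hC, haC, hbC⟩ := hp.2 a b hab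
  obtain ⟨-, c, d, -, rfl⟩ := hbin C hC
  have hne : a ≠ b := by rintro rfl; exact hp.1.irrefl a hab
  rcases haC with rfl | rfl <;> rcases hbC with rfl | rfl <;> simp_all [Set.pair_comm]

theorem BinaryConflicts.mem_of_priority (hbin : BinaryConflicts D Conf) (hp : IsPriority Conf p)
    {a b : F} (hab : p a b) : a ∈ D :=
  (hbin _ (hbin.pair_mem hp hab)).1 (Set.mem_insert a {b})

theorem BinaryConflicts.consistent_iff (hbin : BinaryConflicts D Conf)
    (htot : IsTotalPriority Conf p) {S : Set F} :
    Consistent Conf S ↔ ∀ a ∈ S, ∀ b ∈ S, ¬ p a b := by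
  refine ⟨fun hS a ha b hb hab => hS _ (hbin.pair_mem htot.1 hab) (Set.pair_subset ha hb), ?_⟩
  rintro hS C hC hCS
  obtain ⟨-, a, b, hab, rfl⟩ := hbin C hC
  obtain ⟨ha, hb⟩ := Set.pair_subset_iff.1 hCS
  rcases htot.2 a b hab ⟨_, hC, Set.pair_subset_iff.1 subset_rfl⟩ with h | h
  · exact hS a ha b hb h
  · exact hS b hb a ha h

theorem ParetoOptimal.isStableExtension (hbin : BinaryConflicts D Conf)
    (htot : IsTotalPriority Conf p) {R : Set F} (hR : ParetoOptimal D Conf p R) :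
    IsStableExtension D p R := by
  obtain ⟨⟨hRD, hRcons, -⟩, hnoimp⟩ := hR
  rw [hbin.consistent_iff htot] at hRcons
  refine fun x => ⟨fun hx => ⟨hRD hx, fun y hyx hy => hRcons y hy x hx hyx⟩, ?_⟩
  rintro ⟨hxD, hunatt⟩
  by_contra hxR
  -- add `x` and drop the facts of `R` it beats
  refine hnoimp ⟨insert x {a ∈ R | ¬ p x a}, ?_, ?_, x, Set.mem_insert x _, hxR, ?_⟩
  · exact Set.insert_subset hxD fun a ha => hRD ha.1
  · rw [hbin.consistent_iff htot]
    rintro a (rfl | ⟨haR, hxa⟩) b (rfl | ⟨hbR, hxb⟩) hab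
    · exact htot.1.1.irrefl _ hab
    · exact hxb hab
    · exact hunatt a hab haR
    · exact hRcons a haR b hbR hab
  · exact fun α hαR hαB => by_contra fun hxα => hαB (Set.mem_insert_of_mem x ⟨hαR, hxα⟩)

theorem IsStableExtension.paretoOptimal (hbin : BinaryConflicts D Conf)
    (htot : IsTotalPriority Conf p) {R : Set F} (hR : IsStableExtension D p R) :
    ParetoOptimal D Conf p R := by
  have hRD : R ⊆ D := fun x hx => ((hR x).1 hx).1
  have hRcons : Consistent Conf R := (hbin.consistent_iff htot).2 fun a ha b hb hab =>
    ((hR b).1 hb).2 a hab ha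
  refine ⟨⟨hRD, hRcons, fun S hSD hScons hRS => ?_⟩, ?_⟩
  · rw [hbin.consistent_iff htot] at hScons
    exact Set.Subset.antisymm (fun x hx => (hR x).2
      ⟨hSD hx, fun y hyx hy => hScons y (hRS hy) x hx hyx⟩) hRS
  · rintro ⟨B, hBD, hBcons, β, hβB, hβR, hbeats⟩
    rw [hbin.consistent_iff htot] at hBcons
    obtain ⟨y, hyβ, hyR⟩ : ∃ y, p y β ∧ y ∈ R := by
      simpa [hR β, hBD hβB] using hβR
    have hyB : y ∉ B := fun hyB => hBcons y hyB β hβB hyβ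
    exact htot.1.1 y (.tail (.single hyβ) (hbeats y hyR hyB))

end BinaryTotal

/-- If all conflicts are binary (two-element subsets of `D`) and the priority relation
is total (and acyclic), then there is exactly one Pareto-optimal repair. -/
theorem unique_paretoOptimal_of_binary_total
    (D : Set F) (hD : D.Finite) (Conf : Set (Set F))
    (hbin : ∀ C ∈ Conf, C ⊆ D ∧ ∃ a b, a ≠ b ∧ C = {a, b})
    (p : F → F → Prop) (htot : IsTotalPriority Conf p) :
    ∃! R, ParetoOptimal D Conf p R := by
  have hwf : WellFounded p :=
    htot.1.1.wellFounded_of_finite hD fun _ _ => BinaryConflicts.mem_of_priority hbin htot.1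
  obtain ⟨R, hR⟩ := exists_isStableExtension hwf D
  exact ⟨R, hR.paretoOptimal hbin htot,
    fun R' hR' => (hR'.isStableExtension hbin htot).eq hwf hR⟩
end

section
/- Let Σ be a set of preference rules partitioned into n levels, and let Γ be the characteristic function of the associated SETAF on the cycle KB. Then for every 1 ≤ j ≤ n, the set of grounded pairs of level at most j equals the set of pairs of level at most j in the j-th iterate Γ^j(∅); consequently the grounded extension equals the union of the first n iterates: Grd = ⋃_{i=1}^n Γ^i(∅). -/
/-!
The iterates `Γ^i(∅)` increase and are conflict-free. In the cycle SETAF an attack from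
`Γ^i(∅)` on `e` can always be replaced by one whose edges all have level strictly below
`ℓ(e)`: if an attacking edge `c` has level `ℓ(e)`, the same cycle lets the other edges
together with `e` attack `c`; as `c` is defended, the defence cannot hit the attacking
edges (conflict-freeness), so it hits `e`, one iterate earlier. Hence a grounded edge `e`
is defended by edges of lower level, and induction on the level puts `e` into
`Γ^{ℓ(e)}(∅)`.
-/

/-- In a SETAF with attack relation `att`, the set `S` attacks argument `a` if some
subset of `S` attacks `a`. -/
def setafAttacks {A : Type*} (att : Set A → A → Prop) (S : Set A) (a : A) : Prop :=
  ∃ C ⊆ S, att C a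

/-- The characteristic function of a SETAF: `Γ S` is the set of arguments defended by
`S`, i.e. such that every attacker set contains an element attacked by `S`. -/
def charFun {A : Type*} (att : Set A → A → Prop) (S : Set A) : Set A :=
  {a | ∀ E, att E a → ∃ e ∈ E, setafAttacks att S e}

/-- The SETAF attack of the cycle KB: a set `C` of edges attacks the edge `e` iff
`C ∪ {e}` is a conflict (a minimal directed cycle) and `e` is of least importance
(maximal level index) within the cycle. -/
def cycAtt {E : Type*} (Cyc : Set (Set E)) (lvl : E → ℕ) (C : Set E) (e : E) : Prop :=
  e ∉ C ∧ insert e C ∈ Cyc ∧ ∀ e' ∈ C, lvl e' ≤ lvl e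

section Setaf

variable {A : Type*} (att : Set A → A → Prop)

def IsConflictFree (S : Set A) : Prop :=
  ∀ a ∈ S, ¬ setafAttacks att S a

theorem charFun_mono : Monotone (charFun att) := by
  intro S T hST a ha C hC
  obtain ⟨e, he, D, hD, hatt⟩ := ha C hC
  exact ⟨e, he, D, hD.trans hST, hatt⟩

theorem monotone_charFun_iterate : Monotone fun i => (charFun att)^[i] ∅ :=
  (charFun_mono att).monotone_iterate_of_le_map (Set.empty_subset _)

theorem IsConflictFree.charFun {S : Set A} (hS : IsConflictFree att S) :
    IsConflictFree att (charFun att S) := by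
  rintro a ha ⟨C, hC, hCa⟩
  obtain ⟨c, hcC, D, hDS, hDc⟩ := ha C hCa
  obtain ⟨d, hdD, hd⟩ := hC hcC D hDc
  exact hS d (hDS hdD) hd

theorem isConflictFree_charFun_iterate (i : ℕ) :
    IsConflictFree att ((charFun att)^[i] ∅) := by
  induction i with
  | zero => simp [IsConflictFree]
  | succ i ih =>
    rw [Function.iterate_succ_apply']
    exact ih.charFun att

end Setaf

section CycleKB

variable {A : Type*} {Cyc : Set (Set A)} {lvl : A → ℕ}

theorem cycAtt.swap {C : Set A} {e c : A} (h : cycAtt Cyc lvl C e) (hc : c ∈ C)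
    (hlvl : lvl e ≤ lvl c) : cycAtt Cyc lvl (insert e (C \ {c})) c := by
  obtain ⟨heC, hcyc, hle⟩ := h
  refine ⟨?_, ?_, ?_⟩
  · rintro (rfl | hcC)
    · exact heC hc
    · exact hcC.2 rfl
  · rwa [Set.insert_comm, Set.insert_sdiff_singleton, Set.insert_eq_of_mem hc]
  · rintro d (rfl | hd)
    · exact hlvl
    · exact (hle d hd.1).trans hlvl

theorem exists_strict_attack_of_setafAttacks_iterate (i : ℕ) {e : A}
    (h : setafAttacks (cycAtt Cyc lvl) ((charFun (cycAtt Cyc lvl))^[i] ∅) e) :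
    ∃ C ⊆ (charFun (cycAtt Cyc lvl))^[i] ∅,
      cycAtt Cyc lvl C e ∧ ∀ c ∈ C, lvl c < lvl e := by
  set Γ := charFun (cycAtt Cyc lvl)
  induction i generalizing e with
  | zero =>
    obtain ⟨C, hC, hCe⟩ := h
    obtain rfl : C = ∅ := Set.subset_empty_iff.mp hC
    exact ⟨∅, hC, hCe, by simp⟩
  | succ i ih =>
    obtain ⟨C, hC, hCe⟩ := h
    by_cases hstrict : ∀ c ∈ C, lvl c < lvl e
    · exact ⟨C, hC, hCe, hstrict⟩
    push Not at hstrict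
    obtain ⟨c, hcC, hec⟩ := hstrict
    have hc : c ∈ Γ (Γ^[i] ∅) := by
      rw [← Function.iterate_succ_apply' Γ]
      exact hC hcC
    obtain ⟨d, hd, hattd⟩ := hc _ (hCe.swap hcC hec)
    rcases hd with rfl | ⟨hdC, -⟩
    · obtain ⟨D, hD, hDd, hDlvl⟩ := ih hattd
      exact ⟨D, hD.trans (monotone_charFun_iterate _ i.le_succ), hDd, hDlvl⟩
    · obtain ⟨D, hD, hDd⟩ := hattd
      exact absurd ⟨D, hD.trans (monotone_charFun_iterate _ i.le_succ), hDd⟩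
        (isConflictFree_charFun_iterate _ (i + 1) d (hC hdC))

theorem mem_charFun_iterate_of_lvl_le (hlvl : ∀ e, 1 ≤ lvl e) {m : ℕ} {e : A}
    (he : e ∈ (charFun (cycAtt Cyc lvl))^[m] ∅) {j : ℕ} (hj : lvl e ≤ j) :
    e ∈ (charFun (cycAtt Cyc lvl))^[j] ∅ := by
  induction j generalizing m e with
  | zero => have := hlvl e; omega
  | succ j ih =>
    cases m with
    | zero => simp at he
    | succ m =>
      rw [Function.iterate_succ_apply'] at he ⊢
      intro C hCe
      obtain ⟨e', he'C, hatt⟩ := he C hCe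
      obtain ⟨D, hD, hDe', hDlvl⟩ := exists_strict_attack_of_setafAttacks_iterate m hatt
      have hle : lvl e' ≤ lvl e := hCe.2.2 e' he'C
      refine ⟨e', he'C, D, fun d hd => ih (hD hd) ?_, hDe'⟩
      exact Nat.lt_succ_iff.mp ((hDlvl d hd).trans_le (hle.trans hj))

end CycleKB

theorem grounded_level_characterization_general {E : Type*}
    (Cyc : Set (Set E)) (lvl : E → ℕ) (n : ℕ)
    (hlvl : ∀ e, 1 ≤ lvl e ∧ lvl e ≤ n) :
    (∀ j, 1 ≤ j → j ≤ n →
      {e | e ∈ ⋃ i : ℕ, (charFun (cycAtt Cyc lvl))^[i] ∅ ∧ lvl e ≤ j} =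
      {e | e ∈ (charFun (cycAtt Cyc lvl))^[j] ∅ ∧ lvl e ≤ j}) ∧
    (⋃ i : ℕ, (charFun (cycAtt Cyc lvl))^[i] ∅) =
      ⋃ i ∈ Finset.Icc 1 n, (charFun (cycAtt Cyc lvl))^[i] ∅ := by
  set Γ := charFun (cycAtt Cyc lvl)
  have hgrd {e : E} (he : e ∈ ⋃ i : ℕ, Γ^[i] ∅) {j : ℕ} (hj : lvl e ≤ j) :
      e ∈ Γ^[j] ∅ := by
    obtain ⟨m, hm⟩ := Set.mem_iUnion.mp he
    exact mem_charFun_iterate_of_lvl_le (fun e => (hlvl e).1) hm hj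
  refine ⟨fun j _ _ => ?_, ?_⟩
  · ext e
    exact ⟨fun ⟨he, hj⟩ => ⟨hgrd he hj, hj⟩,
      fun ⟨he, hj⟩ => ⟨Set.mem_iUnion_of_mem j he, hj⟩⟩
  · refine subset_antisymm (fun e he => ?_)
      (Set.iUnion₂_subset fun i _ => Set.subset_iUnion (Γ^[·] ∅) i)
    exact Set.mem_biUnion (Finset.mem_Icc.mpr (hlvl e)) (hgrd he le_rfl)

/-- For preference rules partitioned into `n` levels, with `Γ` the characteristic
function of the associated SETAF on the cycle KB (edges with levels in `{1,…,n}`,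
conflicts `Cyc` the minimal cycles): for every `1 ≤ j ≤ n`, the grounded pairs of level
at most `j` are exactly the pairs of level at most `j` in `Γ^j(∅)`; consequently the
grounded extension is the union of the first `n` iterates. -/
theorem grounded_level_characterization {E : Type*} [Finite E]
    (Cyc : Set (Set E)) (lvl : E → ℕ) (n : ℕ) (hn : 1 ≤ n)
    (hlvl : ∀ e, 1 ≤ lvl e ∧ lvl e ≤ n) :
    (∀ j, 1 ≤ j → j ≤ n →
      {e | e ∈ ⋃ i : ℕ, (charFun (cycAtt Cyc lvl))^[i] ∅ ∧ lvl e ≤ j} =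
      {e | e ∈ (charFun (cycAtt Cyc lvl))^[j] ∅ ∧ lvl e ≤ j}) ∧
    (⋃ i : ℕ, (charFun (cycAtt Cyc lvl))^[i] ∅) =
      ⋃ i ∈ Finset.Icc 1 n, (charFun (cycAtt Cyc lvl))^[i] ∅ :=
  grounded_level_characterization_general Cyc lvl n hlvl
end

section
/- If an edge of level 1 is added to the grounded iteration at step l > 2 (i.e., belongs to Γ^l(∅) \ Γ^{l-1}(∅)), then there exists another edge of level 1 belonging to Γ^{l-1}(∅) \ Γ^{l-2}(∅). -/
/-!
An edge `a` entering the grounded iteration at step `m + 2` is defended against some attacker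
only by a set `C ⊆ Γ^{m+1}(∅)` that is not contained in `Γ^m(∅)`; every edge of `C` has level at
most that of `a`, so some edge of level `≤ lvl a` entered at step `m + 1`. Descending from a
level-1 edge thus yields a new edge of level 0 or 1 one step earlier. Level 0 is impossible, since
iterating the descent would produce a level-0 edge of `Γ^2(∅) \ Γ^1(∅)`: it would be defended by
edges `v ∈ Γ(∅)` attacking a level-0 edge `u`, but then on the cycle through `u` each such `v` is
itself attacked by the remaining edges, none of which is attacked by `∅`.
-/

lemma not_mem_charFun_of_setafAttacks_empty {A : Type*} {att : Set A → A → Prop} {S : Set A}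
    {a : A} (h : setafAttacks att ∅ a) : a ∉ charFun att S := by
  obtain ⟨C, hC, hatt⟩ := h
  exact fun ha => (ha C hatt).elim fun _ hx => hC hx.1

section CycleAttack

variable {E : Type*} {Cyc : Set (Set E)} {lvl : E → ℕ}

lemma cycAtt.rotate {C : Set E} {u v : E} (hu : cycAtt Cyc lvl C u) (hv : v ∈ C)
    (hlvl : lvl u ≤ lvl v) : cycAtt Cyc lvl (insert u (C \ {v})) v := by
  obtain ⟨huC, hcyc, hle⟩ := hu
  refine ⟨?_, ?_, ?_⟩
  · rintro (rfl | ⟨-, hvv⟩)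
    · exact huC hv
    · exact hvv rfl
  · rwa [Set.insert_comm, Set.insert_sdiff_singleton, Set.insert_eq_of_mem hv]
  · rintro w (rfl | ⟨hw, -⟩)
    · exact hlvl
    · exact (hle w hw).trans hlvl

lemma setafAttacks_empty_of_cycAtt_subset_charFun_empty {C : Set E} {u : E}
    (hu : cycAtt Cyc lvl C u) (hC : C ⊆ charFun (cycAtt Cyc lvl) ∅) (hlvl : lvl u = 0) :
    setafAttacks (cycAtt Cyc lvl) ∅ u := by
  by_contra hnot
  obtain ⟨v, hv⟩ : C.Nonempty :=
    Set.nonempty_iff_ne_empty.mpr fun h => hnot ⟨C, h.subset, hu⟩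
  obtain ⟨w, hw, hwatt⟩ := hC hv _ (hu.rotate hv (hlvl ▸ Nat.zero_le _))
  rcases hw with rfl | ⟨hwC, -⟩
  · exact hnot hwatt
  · exact not_mem_charFun_of_setafAttacks_empty hwatt (hC hwC)

lemma exists_lvl_le_mem_iterate_charFun_diff {a : E} {m : ℕ}
    (ha : a ∈ (charFun (cycAtt Cyc lvl))^[m + 2] ∅ \ (charFun (cycAtt Cyc lvl))^[m + 1] ∅) :
    ∃ b, lvl b ≤ lvl a ∧
      b ∈ (charFun (cycAtt Cyc lvl))^[m + 1] ∅ \ (charFun (cycAtt Cyc lvl))^[m] ∅ := by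
  obtain ⟨hin, hout⟩ := ha
  rw [Function.iterate_succ_apply'] at hin hout
  obtain ⟨A, hA, hAout⟩ : ∃ A, cycAtt Cyc lvl A a ∧
      ∀ u ∈ A, ¬ setafAttacks (cycAtt Cyc lvl) ((charFun (cycAtt Cyc lvl))^[m] ∅) u := by
    simpa [charFun] using hout
  obtain ⟨u, huA, C, hCsub, hCu⟩ := hin A hA
  obtain ⟨b, hbC, hbout⟩ := Set.not_subset.mp fun h => hAout u huA ⟨C, h, hCu⟩
  exact ⟨b, (hCu.2.2 b hbC).trans (hA.2.2 u huA), hCsub hbC, hbout⟩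

lemma mem_iterate_charFun_one_of_lvl_eq_zero {c : E} (hc : lvl c = 0)
    (h : c ∈ (charFun (cycAtt Cyc lvl))^[2] ∅) : c ∈ (charFun (cycAtt Cyc lvl))^[1] ∅ := by
  intro A hA
  obtain ⟨u, huA, C, hC, hCu⟩ := h A hA
  exact ⟨u, huA, setafAttacks_empty_of_cycAtt_subset_charFun_empty hCu hC
    (Nat.le_zero.mp (hc ▸ hA.2.2 u huA))⟩

lemma mem_iterate_charFun_of_lvl_eq_zero {c : E} (hc : lvl c = 0) {m : ℕ}
    (h : c ∈ (charFun (cycAtt Cyc lvl))^[m + 2] ∅) : c ∈ (charFun (cycAtt Cyc lvl))^[m + 1] ∅ := by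
  induction m generalizing c with
  | zero => exact mem_iterate_charFun_one_of_lvl_eq_zero hc h
  | succ k ih =>
    by_contra hout
    obtain ⟨b, hb, hbin, hbout⟩ := exists_lvl_le_mem_iterate_charFun_diff ⟨h, hout⟩
    exact hbout (ih (Nat.le_zero.mp (hc ▸ hb)) hbin)

end CycleAttack

theorem level_one_edge_propagation_general {E : Type*}
    (Cyc : Set (Set E)) (lvl : E → ℕ)
    (e : E) (he : lvl e = 1) (l : ℕ) (hl : 2 < l)
    (h₁ : e ∈ (charFun (cycAtt Cyc lvl))^[l] ∅)
    (h₂ : e ∉ (charFun (cycAtt Cyc lvl))^[l - 1] ∅) :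
    ∃ e' : E, lvl e' = 1 ∧ e' ∈ (charFun (cycAtt Cyc lvl))^[l - 1] ∅ ∧
      e' ∉ (charFun (cycAtt Cyc lvl))^[l - 2] ∅ := by
  obtain ⟨k, rfl⟩ : ∃ k, l = k + 3 := ⟨l - 3, by omega⟩
  obtain ⟨b, hb, hbin, hbout⟩ :=
    exists_lvl_le_mem_iterate_charFun_diff (m := k + 1) ⟨h₁, h₂⟩
  rcases Nat.le_one_iff_eq_zero_or_eq_one.mp (he ▸ hb) with hb0 | hb1
  · exact (hbout (mem_iterate_charFun_of_lvl_eq_zero hb0 hbin)).elim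
  · exact ⟨b, hb1, hbin, hbout⟩

/-- If an edge of level 1 is added to the grounded iteration at step `l > 2`
(it belongs to `Γ^l(∅) \ Γ^{l-1}(∅)`), then some other edge of level 1 belongs to
`Γ^{l-1}(∅) \ Γ^{l-2}(∅)`. -/
theorem level_one_edge_propagation {E : Type*} [Finite E]
    (Cyc : Set (Set E)) (lvl : E → ℕ)
    (e : E) (he : lvl e = 1) (l : ℕ) (hl : 2 < l)
    (h₁ : e ∈ (charFun (cycAtt Cyc lvl))^[l] ∅)
    (h₂ : e ∉ (charFun (cycAtt Cyc lvl))^[l - 1] ∅) :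
    ∃ e' : E, lvl e' = 1 ∧ e' ∈ (charFun (cycAtt Cyc lvl))^[l - 1] ∅ ∧
      e' ∉ (charFun (cycAtt Cyc lvl))^[l - 2] ∅ :=
  level_one_edge_propagation_general Cyc lvl e he l hl h₁ h₂
end
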